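/- Let α = (9−√5)/38. For all real numbers μ, a01, b01, c010, c011, c001, c101, c0101, c0110: if the matrix M2(μ, a01, b01, c010, c011, c001, c101, c0101, c0110) is positive semidefinite, then μ ≤ 5√5 − 11. -/

import Mathlib

noncomputable def α : ℝ := (9 - Real.sqrt 5) / 38

noncomputable def M2 (μ a01 b01 c010 c011 c001 c101 c0101 c0110 : ℝ) :
    Matrix (Fin 9) (Fin 9) ℝ :=
  !![1, μ/2+α*(1-μ), μ/2+2*α*(1-μ), μ/2+α*(1-μ), μ/2+2*α*(1-μ), μ/2, μ/2+α*(1-μ), μ/2+α*(1-μ), 0;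
     μ/2+α*(1-μ), μ/2+α*(1-μ), a01, μ/2, μ/2+α*(1-μ), μ/2, μ/2+α*(1-μ), c010, c011;
     μ/2+2*α*(1-μ), a01, μ/2+2*α*(1-μ), μ/2+α*(1-μ), 0, c010, c011, μ/2+α*(1-μ), 0;
     μ/2+α*(1-μ), μ/2, μ/2+α*(1-μ), μ/2+α*(1-μ), b01, μ/2, c001, μ/2+α*(1-μ), c101;
     μ/2+2*α*(1-μ), μ/2+α*(1-μ), 0, b01, μ/2+2*α*(1-μ), c001, μ/2+α*(1-μ), c101, 0;
     μ/2, μ/2, c010, μ/2, c001, μ/2, c001, c010, c0101;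
     μ/2+α*(1-μ), μ/2+α*(1-μ), c011, c001, μ/2+α*(1-μ), c001, μ/2+α*(1-μ), c0110, c011;
     μ/2+α*(1-μ), c010, μ/2+α*(1-μ), μ/2+α*(1-μ), c101, c010, c0110, μ/2+α*(1-μ), c101;
     0, c011, 0, c101, 0, c0101, c011, c101, 0]
/-!
Row 9 of `M2` has a zero diagonal entry, so positive semidefiniteness forces the entries
`c011` and `c101` in that row to vanish. With `A = μ/2 + α(1-μ)` and `B = μ/2 + 2α(1-μ)`,
an explicit nonnegative combination of three quadratic forms of `M2`, in which all remaining
free moments cancel, equals `-2 B D²` with `D = A² - α(1-μ) B`. Hence `D ≤ 0` whenever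
`B > 0`; but `1444 D = (μ - (5√5 - 11)) ((104 + 37√5) μ + 58√5 + 124)`, which is positive
for `μ > 5√5 - 11`.
-/

open Matrix

namespace Matrix.PosSemidef

variable {n : Type*} {M : Matrix n n ℝ}

theorem apply_sq_le_mul_diag (hM : M.PosSemidef) (i j : n) : M i j ^ 2 ≤ M i i * M j j := by
  have hdet := (hM.submatrix ![i, j]).det_nonneg
  have hsymm : M j i = M i j := hM.isHermitian.apply i j
  rw [det_fin_two] at hdet
  simp only [submatrix_apply, cons_val_zero, cons_val_one, hsymm] at hdet
  linarith

theorem apply_eq_zero_of_diag_eq_zero (hM : M.PosSemidef) (i : n) {j : n} (hj : M j j = 0) :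
    M i j = 0 := by
  have h := hM.apply_sq_le_mul_diag i j
  rw [hj, mul_zero] at h
  exact (pow_eq_zero_iff two_ne_zero).mp (le_antisymm h (sq_nonneg _))

end Matrix.PosSemidef

noncomputable def hardyA (μ : ℝ) : ℝ := μ / 2 + α * (1 - μ)

noncomputable def hardyB (μ : ℝ) : ℝ := μ / 2 + 2 * α * (1 - μ)

noncomputable def hardyDisc (μ : ℝ) : ℝ := hardyA μ ^ 2 - α * (1 - μ) * hardyB μ

theorem α_pos : 0 < α := by
  have : Real.sqrt 5 < 9 := by
    rw [Real.sqrt_lt' (by norm_num)]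
    norm_num
  unfold α
  linarith

theorem α_lt_quarter : α < 1 / 4 := by
  have := Real.sqrt_nonneg 5
  unfold α
  linarith

theorem hardyB_pos {μ : ℝ} (hμ : 0 ≤ μ) : 0 < hardyB μ := by
  have := α_pos
  have := α_lt_quarter
  unfold hardyB
  nlinarith

theorem hardyDisc_factor (μ : ℝ) :
    1444 * hardyDisc μ =
      (μ - (5 * Real.sqrt 5 - 11)) * ((104 + 37 * Real.sqrt 5) * μ + 58 * Real.sqrt 5 + 124) := by
  unfold hardyDisc hardyA hardyB α
  linear_combination (185 * μ + 290 - (1 - μ) ^ 2) * Real.sq_sqrt (show (0 : ℝ) ≤ 5 by norm_num)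

theorem eleven_lt_five_mul_sqrt_five : 11 < 5 * Real.sqrt 5 := by
  have : 11 / 5 < Real.sqrt 5 := Real.lt_sqrt_of_sq_lt (by norm_num)
  linarith

theorem hardyDisc_pos {μ : ℝ} (hμ : 5 * Real.sqrt 5 - 11 < μ) : 0 < hardyDisc μ := by
  have hμ0 : 0 < μ := by linarith [eleven_lt_five_mul_sqrt_five]
  have hprod : 0 < (μ - (5 * Real.sqrt 5 - 11)) *
      ((104 + 37 * Real.sqrt 5) * μ + 58 * Real.sqrt 5 + 124) :=
    mul_pos (by linarith) (by positivity)
  linarith [hardyDisc_factor μ]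

theorem hardyB_mul_hardyDisc_sq_nonpos {μ a01 b01 c010 c001 c0101 c0110 : ℝ}
    (h : (M2 μ a01 b01 c010 0 c001 0 c0101 c0110).PosSemidef) (hD : 0 ≤ hardyDisc μ) :
    hardyB μ * hardyDisc μ ^ 2 ≤ 0 := by
  set M := M2 μ a01 b01 c010 0 c001 0 c0101 c0110
  set A := hardyA μ
  set B := hardyB μ
  set D := hardyDisc μ
  let u : Fin 9 → ℝ := ![0, 2 * A * B, -D, 2 * A * B, -D, 0, -2 * A * B, -2 * A * B, 0]
  let y : Fin 9 → ℝ := ![0, 1, 0, -1, 0, 0, -1, 1, 0]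
  let z : Fin 9 → ℝ := ![0, B, A, -B, -A, 0, 0, 0, 0]
  have key : u ⬝ᵥ M *ᵥ u + (2 * A * B) ^ 2 * (y ⬝ᵥ M *ᵥ y) + 2 * D * (z ⬝ᵥ M *ᵥ z) =
      -2 * B * D ^ 2 := by
    simp only [u, y, z, M, A, B, D, M2, hardyDisc, hardyA, hardyB, mulVec, dotProduct,
      Fin.sum_univ_succ, Fin.sum_univ_zero, of_apply, cons_val_zero, cons_val_succ]
    ring
  have hQ (x : Fin 9 → ℝ) : 0 ≤ x ⬝ᵥ M *ᵥ x := by simpa using h.dotProduct_mulVec_nonneg x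
  linarith [hQ u, mul_nonneg (sq_nonneg (2 * A * B)) (hQ y), mul_nonneg hD (hQ z)]

theorem stmt6 (μ a01 b01 c010 c011 c001 c101 c0101 c0110 : ℝ)
    (h : (M2 μ a01 b01 c010 c011 c001 c101 c0101 c0110).PosSemidef) :
    μ ≤ 5 * Real.sqrt 5 - 11 := by
  obtain rfl : c011 = 0 := h.apply_eq_zero_of_diag_eq_zero 1 (j := 8) (by simp [M2])
  obtain rfl : c101 = 0 := h.apply_eq_zero_of_diag_eq_zero 3 (j := 8) (by simp [M2])
  by_contra! hμ
  have hμ0 : 0 ≤ μ := by linarith [eleven_lt_five_mul_sqrt_five]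
  have hD := hardyDisc_pos hμ
  have hBD := hardyB_mul_hardyDisc_sq_nonpos h hD.le
  linarith [mul_pos (hardyB_pos hμ0) (pow_pos hD 2)]
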